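/- arXiv:2010.09018 — 8 statements merged into one kernel-verified Lean document; each statement's English description precedes it below -/
import Mathlib

section
/- Let E be a real inner product space and let r ≥ 1 be a real number. Then for all a, b ∈ E one has ⟪‖a‖^(r−1) • a − ‖b‖^(r−1) • b, a − b⟫ ≥ (‖a‖^r − ‖b‖^r) · (‖a‖ − ‖b‖), and the right-hand side is nonnegative; in particular ⟪‖a‖^(r−1) • a − ‖b‖^(r−1) • b, a − b⟫ ≥ 0, i.e. the map a ↦ ‖a‖^(r−1) • a is monotone. -/
open scoped RealInnerProductSpace

private lemma rpow_pred_mul_self' {r : ℝ} (hr : 1 ≤ r) {x : ℝ} (hx : 0 ≤ x) :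
    x ^ (r - 1) * x = x ^ r := by
  rcases eq_or_lt_of_le hx with h | h
  · subst h
    rw [mul_zero, Real.zero_rpow (show r ≠ 0 by linarith)]
  · rw [← Real.rpow_add_one h.ne', sub_add_cancel]

/-- Monotonicity of the Forchheimer nonlinearity `a ↦ ‖a‖^(r-1) • a` (paper estimate (2pp11)). -/
theorem forchheimer_nonlinearity_monotone
    {E : Type*} [NormedAddCommGroup E] [InnerProductSpace ℝ E]
    (r : ℝ) (hr : 1 ≤ r) (a b : E) :
    ⟪‖a‖ ^ (r - 1) • a - ‖b‖ ^ (r - 1) • b, a - b⟫ ≥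
        (‖a‖ ^ r - ‖b‖ ^ r) * (‖a‖ - ‖b‖) ∧
      (‖a‖ ^ r - ‖b‖ ^ r) * (‖a‖ - ‖b‖) ≥ 0 ∧
      ⟪‖a‖ ^ (r - 1) • a - ‖b‖ ^ (r - 1) • b, a - b⟫ ≥ 0 := by
  have hxa : (0:ℝ) ≤ ‖a‖ := norm_nonneg a
  have hxb : (0:ℝ) ≤ ‖b‖ := norm_nonneg b
  have ha1 : ‖a‖ ^ (r - 1) * ‖a‖ = ‖a‖ ^ r := rpow_pred_mul_self' hr hxa
  have hb1 : ‖b‖ ^ (r - 1) * ‖b‖ = ‖b‖ ^ r := rpow_pred_mul_self' hr hxb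
  have hpa : (0:ℝ) ≤ ‖a‖ ^ (r - 1) := Real.rpow_nonneg hxa _
  have hpb : (0:ℝ) ≤ ‖b‖ ^ (r - 1) := Real.rpow_nonneg hxb _
  have hcs : ⟪a, b⟫ ≤ ‖a‖ * ‖b‖ := real_inner_le_norm a b
  have hba : ⟪b, a⟫ = ⟪a, b⟫ := real_inner_comm a b
  have haa : ⟪a, a⟫ = ‖a‖ * ‖a‖ := real_inner_self_eq_norm_mul_norm a
  have hbb : ⟪b, b⟫ = ‖b‖ * ‖b‖ := real_inner_self_eq_norm_mul_norm b
  have expand : ⟪‖a‖ ^ (r - 1) • a - ‖b‖ ^ (r - 1) • b, a - b⟫ =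
      ‖a‖ ^ (r - 1) * (⟪a, a⟫ - ⟪a, b⟫) - ‖b‖ ^ (r - 1) * (⟪b, a⟫ - ⟪b, b⟫) := by
    simp [inner_sub_left, inner_sub_right, real_inner_smul_left]
    ring
  have key : ⟪‖a‖ ^ (r - 1) • a - ‖b‖ ^ (r - 1) • b, a - b⟫ ≥
      (‖a‖ ^ r - ‖b‖ ^ r) * (‖a‖ - ‖b‖) := by
    rw [expand, hba, haa, hbb]
    nlinarith [mul_le_mul_of_nonneg_left hcs hpa, mul_le_mul_of_nonneg_left hcs hpb]
  have rhs : (‖a‖ ^ r - ‖b‖ ^ r) * (‖a‖ - ‖b‖) ≥ 0 := by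
    rcases le_total ‖a‖ ‖b‖ with h | h
    · have h2 : ‖a‖ ^ r ≤ ‖b‖ ^ r := Real.rpow_le_rpow hxa h (by linarith)
      have h1 : ‖a‖ ^ r - ‖b‖ ^ r ≤ 0 := by linarith
      have h3 : ‖a‖ - ‖b‖ ≤ 0 := by linarith
      nlinarith [mul_nonneg (neg_nonneg.2 h1) (neg_nonneg.2 h3)]
    · have h2 : ‖b‖ ^ r ≤ ‖a‖ ^ r := Real.rpow_le_rpow hxb h (by linarith)
      have h1 : (0:ℝ) ≤ ‖a‖ ^ r - ‖b‖ ^ r := by linarith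
      have h3 : (0:ℝ) ≤ ‖a‖ - ‖b‖ := by linarith
      exact mul_nonneg h1 h3
  exact ⟨key, rhs, le_trans rhs key⟩
end

section
/- Let E be a real inner product space and let r ≥ 1 be a real number. Then for all a, b ∈ E, ⟪a, b⟫ · (‖a‖^(r−1) + ‖b‖^(r−1)) − ‖a‖² · ‖b‖^(r−1) − ‖b‖² · ‖a‖^(r−1) ≥ −(1/2) · ‖a‖^(r−1) · ‖a − b‖² − (1/2) · ‖b‖^(r−1) · ‖a − b‖². -/
open scoped RealInnerProductSpace

/-- Auxiliary inequality in the proof of the strong monotonicity estimate (2.23). -/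
theorem forchheimer_auxiliary_inequality
    {E : Type*} [NormedAddCommGroup E] [InnerProductSpace ℝ E]
    (r : ℝ) (hr : 1 ≤ r) (a b : E) :
    ⟪a, b⟫ * (‖a‖ ^ (r - 1) + ‖b‖ ^ (r - 1))
        - ‖a‖ ^ 2 * ‖b‖ ^ (r - 1) - ‖b‖ ^ 2 * ‖a‖ ^ (r - 1) ≥
      -(1 / 2) * ‖a‖ ^ (r - 1) * ‖a - b‖ ^ 2
        - (1 / 2) * ‖b‖ ^ (r - 1) * ‖a - b‖ ^ 2 := by
  have hsub : ‖a - b‖ ^ 2 = ‖a‖ ^ 2 - 2 * ⟪a, b⟫ + ‖b‖ ^ 2 := by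
    rw [@norm_sub_sq_real]
  have hkey : 0 ≤ (‖a‖ ^ (r - 1) - ‖b‖ ^ (r - 1)) * (‖a‖ ^ 2 - ‖b‖ ^ 2) := by
    rcases le_total ‖a‖ ‖b‖ with h | h
    · nlinarith [sub_nonpos.2 (Real.rpow_le_rpow (norm_nonneg a) h (by linarith : (0:ℝ) ≤ r - 1)),
        sub_nonpos.2 (pow_le_pow_left₀ (norm_nonneg a) h 2)]
    · apply mul_nonneg
      · simp only [sub_nonneg]
        exact Real.rpow_le_rpow (norm_nonneg b) h (by linarith)
      · simp only [sub_nonneg]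
        exact pow_le_pow_left₀ (norm_nonneg b) h 2
  rw [ge_iff_le, hsub]
  nlinarith [hkey]
end

section
/- Let E be a real inner product space and let r ≥ 1 be a real number. Then for all a, b ∈ E, ⟪‖a‖^(r−1) • a − ‖b‖^(r−1) • b, a − b⟫ ≥ (1/2) · ‖a‖^(r−1) · ‖a − b‖² + (1/2) · ‖b‖^(r−1) · ‖a − b‖². -/
open scoped RealInnerProductSpace

/-- Pointwise form of the strong monotonicity estimate (2.23). -/
theorem forchheimer_strong_monotonicity
    {E : Type*} [NormedAddCommGroup E] [InnerProductSpace ℝ E]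
    (r : ℝ) (hr : 1 ≤ r) (a b : E) :
    ⟪‖a‖ ^ (r - 1) • a - ‖b‖ ^ (r - 1) • b, a - b⟫ ≥
      (1 / 2) * ‖a‖ ^ (r - 1) * ‖a - b‖ ^ 2
        + (1 / 2) * ‖b‖ ^ (r - 1) * ‖a - b‖ ^ 2 := by
  set α := ‖a‖ ^ (r - 1) with hα
  set β := ‖b‖ ^ (r - 1) with hβ
  have hre : (0:ℝ) ≤ r - 1 := by linarith
  have key : (α - β) * (‖a‖ ^ 2 - ‖b‖ ^ 2) ≥ 0 := by
    rcases le_total ‖a‖ ‖b‖ with h | h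
    · have h1 : α ≤ β := Real.rpow_le_rpow (norm_nonneg a) h hre
      have h2 : ‖a‖ ^ 2 ≤ ‖b‖ ^ 2 := by nlinarith [norm_nonneg a, norm_nonneg b]
      nlinarith
    · have h1 : β ≤ α := Real.rpow_le_rpow (norm_nonneg b) h hre
      have h2 : ‖b‖ ^ 2 ≤ ‖a‖ ^ 2 := by nlinarith [norm_nonneg a, norm_nonneg b]
      exact mul_nonneg (by linarith) (by linarith)
  have expand : ⟪α • a - β • b, a - b⟫ =
      α * ‖a‖ ^ 2 - (α + β) * ⟪a, b⟫ + β * ‖b‖ ^ 2 := by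
    simp only [inner_sub_left, inner_sub_right, real_inner_smul_left,
      real_inner_self_eq_norm_sq, real_inner_comm b a]
    ring
  have hnorm : ‖a - b‖ ^ 2 = ‖a‖ ^ 2 - 2 * ⟪a, b⟫ + ‖b‖ ^ 2 :=
    norm_sub_sq_real a b
  rw [expand, hnorm]
  nlinarith [key]
end

section
/- Let E be a real inner product space and let r ≥ 1 be a real number. Then for all a, b ∈ E, ⟪‖a‖^(r−1) • a − ‖b‖^(r−1) • b, a − b⟫ ≥ 2^(1−r) · ‖a − b‖^(r+1). -/
/-!
With `x = ‖a‖`, `y = ‖b‖` and `u = ‖a - b‖²`, the left-hand side equals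
`x ^ (r + 1) + y ^ (r + 1) - (x ^ (r - 1) + y ^ (r - 1)) * ⟪a, b⟫`, which is affine in `u`, while the
right-hand side `2 ^ (1 - r) * u ^ ((r + 1) / 2)` is convex in `u`. By the triangle inequality `u`
ranges over `[(x - y)², (x + y)²]`, so it suffices to check the two endpoints, where `a` and `b` are
parallel: at `(x + y)²` the claim is the power-mean inequality
`(x + y) ^ r ≤ 2 ^ (r - 1) * (x ^ r + y ^ r)`, at `(x - y)²` it follows from the superadditivity
`|x - y| ^ r ≤ |x ^ r - y ^ r|`.
-/

open scoped RealInnerProductSpace NNReal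
open Real Set

theorem Real.rpow_add_le_mul_rpow_add_rpow {p x y : ℝ} (hx : 0 ≤ x) (hy : 0 ≤ y) (hp : 1 ≤ p) :
    (x + y) ^ p ≤ 2 ^ (p - 1) * (x ^ p + y ^ p) := by
  lift x to ℝ≥0 using hx
  lift y to ℝ≥0 using hy
  exact_mod_cast NNReal.rpow_add_le_mul_rpow_add_rpow x y hp

theorem ConvexOn.le_of_concaveOn_of_mem_segment {E : Type*} [AddCommGroup E] [Module ℝ E]
    {s : Set E} {f g : E → ℝ} (hf : ConvexOn ℝ s f) (hg : ConcaveOn ℝ s g) {x y z : E}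
    (hx : x ∈ s) (hy : y ∈ s) (hz : z ∈ segment ℝ x y) (hfgx : f x ≤ g x) (hfgy : f y ≤ g y) :
    f z ≤ g z := by
  have := (hf.sub hg).le_on_segment hx hy hz
  simp only [Pi.sub_apply, le_max_iff] at this
  rcases this with h | h <;> linarith

lemma abs_sub_rpow_add_one_le {r x y : ℝ} (hr : 1 ≤ r) (hx : 0 ≤ x) (hy : 0 ≤ y) :
    |x - y| ^ (r + 1) ≤ (x ^ r - y ^ r) * (x - y) := by
  wlog hyx : y ≤ x generalizing x y
  · have := this hy hx (le_of_not_ge hyx)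
    rwa [abs_sub_comm, show (y ^ r - x ^ r) * (y - x) = (x ^ r - y ^ r) * (x - y) by ring] at this
  have hsub : (x - y) ^ r ≤ x ^ r - y ^ r := by
    have := add_rpow_le_rpow_add hy (sub_nonneg.2 hyx) hr
    rw [add_sub_cancel] at this
    linarith
  rw [abs_of_nonneg (sub_nonneg.2 hyx), rpow_add_one' (sub_nonneg.2 hyx) (by linarith)]
  exact mul_le_mul_of_nonneg_right hsub (sub_nonneg.2 hyx)

lemma two_rpow_mul_add_rpow_add_one_le {r x y : ℝ} (hr : 1 ≤ r) (hx : 0 ≤ x) (hy : 0 ≤ y) :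
    2 ^ (1 - r) * (x + y) ^ (r + 1) ≤ (x ^ r + y ^ r) * (x + y) := by
  have hmean : 2 ^ (1 - r) * (x + y) ^ r ≤ x ^ r + y ^ r := by
    have h2 : (2 : ℝ) ^ (1 - r) * 2 ^ (r - 1) = 1 := by
      rw [← rpow_add two_pos, show 1 - r + (r - 1) = 0 by ring, rpow_zero]
    calc 2 ^ (1 - r) * (x + y) ^ r
        ≤ 2 ^ (1 - r) * (2 ^ (r - 1) * (x ^ r + y ^ r)) :=
          mul_le_mul_of_nonneg_left (rpow_add_le_mul_rpow_add_rpow hx hy hr) (by positivity)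
      _ = x ^ r + y ^ r := by rw [← mul_assoc, h2, one_mul]
  rw [rpow_add_one' (add_nonneg hx hy) (by linarith), ← mul_assoc]
  exact mul_le_mul_of_nonneg_right hmean (add_nonneg hx hy)

lemma rpow_sub_one_mul_self {r x : ℝ} (hr : r ≠ 0) (hx : 0 ≤ x) : x ^ (r - 1) * x = x ^ r := by
  rw [← rpow_add_one' hx (by simpa), sub_add_cancel]

lemma rpow_add_one_eq_rpow_sub_one_mul_mul {r x : ℝ} (hr : 0 < r) (hx : 0 ≤ x) :
    x ^ (r + 1) = x ^ (r - 1) * x * x := by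
  rw [rpow_add_one' hx (by linarith), rpow_sub_one_mul_self hr.ne' hx]

/-- `⟪‖a‖ ^ (r - 1) • a - ‖b‖ ^ (r - 1) • b, a - b⟫` as a function of `x = ‖a‖`, `y = ‖b‖` and
`u = ‖a - b‖ ^ 2`. -/
noncomputable def normPairing (r x y u : ℝ) : ℝ :=
  x ^ (r + 1) + y ^ (r + 1) - (x ^ (r - 1) + y ^ (r - 1)) * ((x ^ 2 + y ^ 2 - u) / 2)

lemma inner_rpow_smul_sub_eq_normPairing {E : Type*} [NormedAddCommGroup E]
    [InnerProductSpace ℝ E] {r : ℝ} (hr : 0 < r) (a b : E) :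
    ⟪‖a‖ ^ (r - 1) • a - ‖b‖ ^ (r - 1) • b, a - b⟫ = normPairing r ‖a‖ ‖b‖ (‖a - b‖ ^ 2) := by
  have hx := rpow_add_one_eq_rpow_sub_one_mul_mul hr (norm_nonneg a)
  have hy := rpow_add_one_eq_rpow_sub_one_mul_mul hr (norm_nonneg b)
  have hab : ⟪a, b⟫ = (‖a‖ ^ 2 + ‖b‖ ^ 2 - ‖a - b‖ ^ 2) / 2 := by
    rw [norm_sub_sq_real]; ring
  simp only [normPairing, inner_sub_left, inner_sub_right, real_inner_smul_left,
    real_inner_self_eq_norm_sq, real_inner_comm a b, hab, hx, hy]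
  ring

lemma concaveOn_normPairing (r x y : ℝ) : ConcaveOn ℝ (Ici 0) (normPairing r x y) := by
  have haffine : normPairing r x y = fun u ↦ (x ^ (r - 1) + y ^ (r - 1)) / 2 * u +
      (x ^ (r + 1) + y ^ (r + 1) - (x ^ (r - 1) + y ^ (r - 1)) * ((x ^ 2 + y ^ 2) / 2)) := by
    funext u
    simp only [normPairing]
    ring
  rw [haffine]
  exact ((LinearMap.mulLeft ℝ _).concaveOn (convex_Ici 0)).add_const _

lemma normPairing_sub_sq {r x y : ℝ} (hr : 0 < r) (hx : 0 ≤ x) (hy : 0 ≤ y) :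
    normPairing r x y ((x - y) ^ 2) = (x ^ r - y ^ r) * (x - y) := by
  simp only [normPairing, rpow_add_one_eq_rpow_sub_one_mul_mul hr hx,
    rpow_add_one_eq_rpow_sub_one_mul_mul hr hy, ← rpow_sub_one_mul_self hr.ne' hx,
    ← rpow_sub_one_mul_self hr.ne' hy]
  ring

lemma normPairing_add_sq {r x y : ℝ} (hr : 0 < r) (hx : 0 ≤ x) (hy : 0 ≤ y) :
    normPairing r x y ((x + y) ^ 2) = (x ^ r + y ^ r) * (x + y) := by
  simp only [normPairing, rpow_add_one_eq_rpow_sub_one_mul_mul hr hx,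
    rpow_add_one_eq_rpow_sub_one_mul_mul hr hy, ← rpow_sub_one_mul_self hr.ne' hx,
    ← rpow_sub_one_mul_self hr.ne' hy]
  ring

lemma two_rpow_mul_rpow_le_normPairing {r x y d : ℝ} (hr : 1 ≤ r) (hx : 0 ≤ x) (hy : 0 ≤ y)
    (hd₁ : |x - y| ≤ d) (hd₂ : d ≤ x + y) :
    2 ^ (1 - r) * d ^ (r + 1) ≤ normPairing r x y (d ^ 2) := by
  have hd : 0 ≤ d := (abs_nonneg _).trans hd₁
  have hr₀ : 0 < r := by linarith
  have hconv : ConvexOn ℝ (Ici 0) fun u : ℝ ↦ 2 ^ (1 - r) * u ^ ((r + 1) / 2) :=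
    (convexOn_rpow (by linarith)).smul (by positivity)
  have hsqrt : ∀ t : ℝ, (t ^ 2) ^ ((r + 1) / 2) = |t| ^ (r + 1) := fun t ↦ by
    rw [rpow_div_two_eq_sqrt _ (sq_nonneg t), sqrt_sq_eq_abs]
  have hmem : d ^ 2 ∈ segment ℝ ((x - y) ^ 2) ((x + y) ^ 2) := by
    rw [segment_eq_Icc (by nlinarith)]
    constructor
    · rw [← sq_abs (x - y)]
      exact pow_le_pow_left₀ (abs_nonneg _) hd₁ 2
    · exact pow_le_pow_left₀ hd hd₂ 2
  have hlow : 2 ^ (1 - r) * |x - y| ^ (r + 1) ≤ (x ^ r - y ^ r) * (x - y) :=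
    (mul_le_of_le_one_left (by positivity) (rpow_le_one_of_one_le_of_nonpos one_le_two
      (by linarith))).trans (abs_sub_rpow_add_one_le hr hx hy)
  have hhigh := two_rpow_mul_add_rpow_add_one_le hr hx hy
  have h := hconv.le_of_concaveOn_of_mem_segment (concaveOn_normPairing r x y)
    (mem_Ici.2 (sq_nonneg _)) (mem_Ici.2 (sq_nonneg _)) hmem
    (by simpa only [hsqrt, normPairing_sub_sq hr₀ hx hy] using hlow)
    (by simpa only [hsqrt, normPairing_add_sq hr₀ hx hy, abs_of_nonneg (add_nonneg hx hy)]
      using hhigh)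
  simpa only [hsqrt, abs_of_nonneg hd] using h

/-- Pointwise form of the coercive monotonicity estimate (214). -/
theorem forchheimer_coercive_monotonicity
    {E : Type*} [NormedAddCommGroup E] [InnerProductSpace ℝ E]
    (r : ℝ) (hr : 1 ≤ r) (a b : E) :
    ⟪‖a‖ ^ (r - 1) • a - ‖b‖ ^ (r - 1) • b, a - b⟫ ≥
      (2 : ℝ) ^ (1 - r) * ‖a - b‖ ^ (r + 1) := by
  rw [ge_iff_le, inner_rpow_smul_sub_eq_normPairing (by linarith)]
  exact two_rpow_mul_rpow_le_normPairing hr (norm_nonneg a) (norm_nonneg b)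
    (abs_norm_sub_norm_le a b) (norm_sub_le a b)
end

section
/- Let (Ω, μ) be a measure space, E a real inner product space, r ≥ 1 a real number, and X, Y : Ω → E measurable functions. Then, with all integrals taken as Lebesgue integrals of nonnegative extended-real-valued functions (values in [0, ∞]), ∫⁻ [ (1/2)‖X(ω)‖^(r−1)‖X(ω) − Y(ω)‖² + (1/2)‖Y(ω)‖^(r−1)‖X(ω) − Y(ω)‖² ] dμ(ω) ≤ ∫⁻ ⟪‖X(ω)‖^(r−1) • X(ω) − ‖Y(ω)‖^(r−1) • Y(ω), X(ω) − Y(ω)⟫ dμ(ω), where the (pointwise nonnegative) inner-product integrand is converted to [0, ∞] via the canonical coercion of nonnegative reals. -/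
open MeasureTheory
open scoped RealInnerProductSpace ENNReal

lemma pointwise_strong_mono {E : Type*} [NormedAddCommGroup E] [InnerProductSpace ℝ E]
    (p : ℝ) (hp : 0 ≤ p) (a b : E) :
    (1 / 2) * ‖a‖ ^ p * ‖a - b‖ ^ 2 + (1 / 2) * ‖b‖ ^ p * ‖a - b‖ ^ 2
      ≤ ⟪‖a‖ ^ p • a - ‖b‖ ^ p • b, a - b⟫ := by
  have hkey : 0 ≤ (‖a‖ ^ p - ‖b‖ ^ p) * (‖a‖ ^ 2 - ‖b‖ ^ 2) := by
    rcases le_total ‖a‖ ‖b‖ with h | h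
    · have h1 : ‖a‖ ^ p ≤ ‖b‖ ^ p := Real.rpow_le_rpow (norm_nonneg a) h hp
      have h2 : ‖a‖ ^ 2 ≤ ‖b‖ ^ 2 := by nlinarith [norm_nonneg a]
      nlinarith [h1, h2]
    · have h1 : ‖b‖ ^ p ≤ ‖a‖ ^ p := Real.rpow_le_rpow (norm_nonneg b) h hp
      have h2 : ‖b‖ ^ 2 ≤ ‖a‖ ^ 2 := by nlinarith [norm_nonneg b]
      exact mul_nonneg (by linarith) (by linarith)
  have hnorm : ‖a - b‖ ^ 2 = ‖a‖ ^ 2 - 2 * ⟪a, b⟫ + ‖b‖ ^ 2 := norm_sub_sq_real a b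
  have hexp : ⟪‖a‖ ^ p • a - ‖b‖ ^ p • b, a - b⟫
      = ‖a‖ ^ p * ‖a‖ ^ 2 + ‖b‖ ^ p * ‖b‖ ^ 2 - (‖a‖ ^ p + ‖b‖ ^ p) * ⟪a, b⟫ := by
    simp only [inner_sub_left, inner_sub_right, real_inner_smul_left,
      real_inner_self_eq_norm_sq, real_inner_comm b a]
    ring
  rw [hexp, hnorm]
  nlinarith [hkey]

/-- Integrated strong monotonicity estimate (2.23). -/
theorem integrated_strong_monotonicity
    {Ω : Type*} [MeasurableSpace Ω] (μ : Measure Ω)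
    {E : Type*} [NormedAddCommGroup E] [InnerProductSpace ℝ E] [MeasurableSpace E]
    (r : ℝ) (hr : 1 ≤ r) (X Y : Ω → E) (hX : Measurable X) (hY : Measurable Y) :
    ∫⁻ ω, ENNReal.ofReal
        ((1 / 2) * ‖X ω‖ ^ (r - 1) * ‖X ω - Y ω‖ ^ 2
          + (1 / 2) * ‖Y ω‖ ^ (r - 1) * ‖X ω - Y ω‖ ^ 2) ∂μ ≤
      ∫⁻ ω, ENNReal.ofReal
        ⟪‖X ω‖ ^ (r - 1) • X ω - ‖Y ω‖ ^ (r - 1) • Y ω, X ω - Y ω⟫ ∂μ := by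
  refine lintegral_mono fun ω => ENNReal.ofReal_le_ofReal ?_
  exact pointwise_strong_mono (r - 1) (by linarith) (X ω) (Y ω)
end

section
/- Let (Ω, μ) be a measure space, E a real inner product space, r ≥ 1 a real number, and X, Y : Ω → E measurable functions. Then, with Lebesgue integrals valued in [0, ∞], 2^(1−r) · ∫⁻ ‖X(ω) − Y(ω)‖^(r+1) dμ(ω) ≤ ∫⁻ ⟪‖X(ω)‖^(r−1) • X(ω) − ‖Y(ω)‖^(r−1) • Y(ω), X(ω) − Y(ω)⟫ dμ(ω), where the (pointwise nonnegative) inner-product integrand is converted to [0, ∞] via the canonical coercion of nonnegative reals. -/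
open MeasureTheory
open scoped RealInnerProductSpace ENNReal

private lemma rpow_sub_one_mul {r : ℝ} (hr : 0 < r) {x : ℝ} (hx : 0 ≤ x) :
    x ^ (r - 1) * x = x ^ r := by
  rcases hx.eq_or_lt with h | h
  · rw [← h, Real.zero_rpow (ne_of_gt hr), mul_zero]
  · calc x ^ (r - 1) * x = x ^ (r - 1) * x ^ (1 : ℝ) := by rw [Real.rpow_one]
      _ = x ^ (r - 1 + 1) := (Real.rpow_add h _ _).symm
      _ = x ^ r := by ring_nf

private lemma mean_rpow {r s t : ℝ} (hr : 1 ≤ r) (hs : 0 ≤ s) (ht : 0 ≤ t) :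
    (s + t) ^ r ≤ 2 ^ (r - 1) * (s ^ r + t ^ r) := by
  have h := NNReal.rpow_add_le_mul_rpow_add_rpow s.toNNReal t.toNNReal hr
  have := NNReal.coe_le_coe.2 h
  push_cast at this
  rwa [Real.coe_toNNReal s hs, Real.coe_toNNReal t ht] at this

private lemma scalar_key {r : ℝ} (hr : 1 ≤ r) {s t u c : ℝ} (hs : 0 ≤ s) (ht : 0 ≤ t)
    (hu : 0 ≤ u) (hut : u ≤ s + t) (hI : u ^ 2 = s ^ 2 + t ^ 2 - 2 * c) :
    (2 : ℝ) ^ (1 - r) * u ^ (r + 1) ≤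
      s ^ (r - 1) * s ^ 2 + t ^ (r - 1) * t ^ 2 - (s ^ (r - 1) + t ^ (r - 1)) * c := by
  have hr0 : (0 : ℝ) ≤ r - 1 := by linarith
  have hrpos : (0 : ℝ) < r := by linarith
  have hst : (0 : ℝ) ≤ s + t := by linarith
  have hsq : ∀ x : ℝ, 0 ≤ x → x ^ (r - 1) * x ^ 2 = x ^ r * x := fun x h0 => by
    rw [sq, ← mul_assoc, rpow_sub_one_mul hrpos h0]
  -- B ≥ 0
  have hB : 0 ≤ (s ^ (r - 1) - t ^ (r - 1)) * (s ^ 2 - t ^ 2) := by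
    rcases le_total s t with h | h
    · have h1 : s ^ (r - 1) ≤ t ^ (r - 1) := Real.rpow_le_rpow hs h hr0
      have h2 : s ^ 2 ≤ t ^ 2 := pow_le_pow_left₀ hs h 2
      nlinarith
    · have h1 : t ^ (r - 1) ≤ s ^ (r - 1) := Real.rpow_le_rpow ht h hr0
      have h2 : t ^ 2 ≤ s ^ 2 := pow_le_pow_left₀ ht h 2
      nlinarith
  -- u^(r+1) ≤ (s+t)^(r-1) * u^2
  have h3 : u ^ (r + 1) ≤ (s + t) ^ (r - 1) * u ^ 2 := by
    have e1 : u ^ (r + 1) = u ^ (r - 1) * u ^ 2 := by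
      have : u ^ (r + 1 - 1) * u = u ^ (r + 1) := rpow_sub_one_mul (by linarith) hu
      have e2 : u ^ (r - 1) * u = u ^ r := rpow_sub_one_mul hrpos hu
      rw [sq, ← mul_assoc, e2]
      rw [show r + 1 - 1 = r by ring] at this
      exact this.symm
    rw [e1]
    exact mul_le_mul_of_nonneg_right (Real.rpow_le_rpow hu hut hr0) (sq_nonneg u)
  -- endpoint inequality: 2^(1-r) * (s+t)^(r-1) * (s+t)^2 ≤ (s+t)*(s^r + t^r)
  have htwo : (2 : ℝ) ^ (1 - r) * 2 ^ (r - 1) = 1 := by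
    rw [← Real.rpow_add (by norm_num : (0:ℝ) < 2)]
    norm_num
  have h2pos : (0 : ℝ) < 2 ^ (1 - r) := Real.rpow_pos_of_pos (by norm_num) _
  have hEnd : 2 ^ (1 - r) * ((s + t) ^ (r - 1) * (s + t) ^ 2) ≤ (s + t) * (s ^ r + t ^ r) := by
    have e : (s + t) ^ (r - 1) * (s + t) ^ 2 = (s + t) ^ r * (s + t) := hsq _ hst
    rw [e]
    have h := mean_rpow hr hs ht
    calc 2 ^ (1 - r) * ((s + t) ^ r * (s + t))
        ≤ 2 ^ (1 - r) * (2 ^ (r - 1) * (s ^ r + t ^ r) * (s + t)) := by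
          apply mul_le_mul_of_nonneg_left _ h2pos.le
          exact mul_le_mul_of_nonneg_right h hst
      _ = (s + t) * (s ^ r + t ^ r) := by rw [← mul_assoc, ← mul_assoc, htwo]; ring
  -- identity: (s+t)*(s^r+t^r) = A/2*(s+t)^2 + B/2
  have hid : (s + t) * (s ^ r + t ^ r) =
      (s ^ (r - 1) + t ^ (r - 1)) / 2 * (s + t) ^ 2 +
        (s ^ (r - 1) - t ^ (r - 1)) * (s ^ 2 - t ^ 2) / 2 := by
    have es : s ^ (r - 1) * s = s ^ r := rpow_sub_one_mul hrpos hs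
    have et : t ^ (r - 1) * t = t ^ r := rpow_sub_one_mul hrpos ht
    rw [← es, ← et]; ring
  -- rewrite goal RHS using hI
  have hRHS : s ^ (r - 1) * s ^ 2 + t ^ (r - 1) * t ^ 2 - (s ^ (r - 1) + t ^ (r - 1)) * c =
      (s ^ (r - 1) + t ^ (r - 1)) / 2 * u ^ 2 +
        (s ^ (r - 1) - t ^ (r - 1)) * (s ^ 2 - t ^ 2) / 2 := by
    rw [hI]; ring
  rw [hRHS]
  have husq : u ^ 2 ≤ (s + t) ^ 2 := pow_le_pow_left₀ hu hut 2
  have hmain : 2 ^ (1 - r) * u ^ (r + 1) ≤ 2 ^ (1 - r) * (s + t) ^ (r - 1) * u ^ 2 := by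
    calc 2 ^ (1 - r) * u ^ (r + 1) ≤ 2 ^ (1 - r) * ((s + t) ^ (r - 1) * u ^ 2) :=
          mul_le_mul_of_nonneg_left h3 h2pos.le
      _ = 2 ^ (1 - r) * (s + t) ^ (r - 1) * u ^ 2 := by ring
  have hEnd2 : 2 ^ (1 - r) * (s + t) ^ (r - 1) * (s + t) ^ 2 ≤
      (s ^ (r - 1) + t ^ (r - 1)) / 2 * (s + t) ^ 2 +
        (s ^ (r - 1) - t ^ (r - 1)) * (s ^ 2 - t ^ 2) / 2 := by
    calc 2 ^ (1 - r) * (s + t) ^ (r - 1) * (s + t) ^ 2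
        = 2 ^ (1 - r) * ((s + t) ^ (r - 1) * (s + t) ^ 2) := by ring
      _ ≤ (s + t) * (s ^ r + t ^ r) := hEnd
      _ = _ := hid
  rcases le_total (2 ^ (1 - r) * (s + t) ^ (r - 1)) ((s ^ (r - 1) + t ^ (r - 1)) / 2) with h | h
  · have h1 : 2 ^ (1 - r) * (s + t) ^ (r - 1) * u ^ 2 ≤
        (s ^ (r - 1) + t ^ (r - 1)) / 2 * u ^ 2 :=
      mul_le_mul_of_nonneg_right h (sq_nonneg u)
    linarith
  · have hd : 0 ≤ 2 ^ (1 - r) * (s + t) ^ (r - 1) - (s ^ (r - 1) + t ^ (r - 1)) / 2 := by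
      linarith
    have h1 : (2 ^ (1 - r) * (s + t) ^ (r - 1) - (s ^ (r - 1) + t ^ (r - 1)) / 2) * u ^ 2 ≤
        (2 ^ (1 - r) * (s + t) ^ (r - 1) - (s ^ (r - 1) + t ^ (r - 1)) / 2) * (s + t) ^ 2 :=
      mul_le_mul_of_nonneg_left husq hd
    nlinarith [hmain, hEnd2, h1]

private lemma pointwise_coercive {E : Type*} [NormedAddCommGroup E] [InnerProductSpace ℝ E]
    {r : ℝ} (hr : 1 ≤ r) (a b : E) :
    (2 : ℝ) ^ (1 - r) * ‖a - b‖ ^ (r + 1) ≤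
      ⟪‖a‖ ^ (r - 1) • a - ‖b‖ ^ (r - 1) • b, a - b⟫ := by
  have hinner : ⟪‖a‖ ^ (r - 1) • a - ‖b‖ ^ (r - 1) • b, a - b⟫ =
      ‖a‖ ^ (r - 1) * ‖a‖ ^ 2 + ‖b‖ ^ (r - 1) * ‖b‖ ^ 2 -
        (‖a‖ ^ (r - 1) + ‖b‖ ^ (r - 1)) * ⟪a, b⟫ := by
    simp only [inner_sub_left, inner_sub_right, real_inner_smul_left,
      real_inner_self_eq_norm_sq, real_inner_comm b a]
    ring
  have hI : ‖a - b‖ ^ 2 = ‖a‖ ^ 2 + ‖b‖ ^ 2 - 2 * ⟪a, b⟫ := by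
    rw [@norm_sub_sq_real]; ring
  rw [hinner]
  exact scalar_key hr (norm_nonneg a) (norm_nonneg b) (norm_nonneg (a - b))
    (norm_sub_le a b) hI

/-- Integrated coercive monotonicity estimate (214). -/
theorem integrated_coercive_monotonicity
    {Ω : Type*} [MeasurableSpace Ω] (μ : Measure Ω)
    {E : Type*} [NormedAddCommGroup E] [InnerProductSpace ℝ E] [MeasurableSpace E]
    (r : ℝ) (hr : 1 ≤ r) (X Y : Ω → E) (hX : Measurable X) (hY : Measurable Y) :
    ENNReal.ofReal ((2 : ℝ) ^ (1 - r)) *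
        ∫⁻ ω, ENNReal.ofReal (‖X ω - Y ω‖ ^ (r + 1)) ∂μ ≤
      ∫⁻ ω, ENNReal.ofReal
        ⟪‖X ω‖ ^ (r - 1) • X ω - ‖Y ω‖ ^ (r - 1) • Y ω, X ω - Y ω⟫ ∂μ := by
  rw [← lintegral_const_mul' _ _ ENNReal.ofReal_ne_top]
  apply lintegral_mono
  intro ω
  dsimp only
  rw [← ENNReal.ofReal_mul (by positivity)]
  exact ENNReal.ofReal_le_ofReal (pointwise_coercive hr (X ω) (Y ω))
end

section
/- Let E be a real inner product space and let r ≥ 1 be a real number. Then for all a, b ∈ E, ‖ ‖a‖^(r−1) • a − ‖b‖^(r−1) • b ‖ ≤ r · (‖a‖ + ‖b‖)^(r−1) · ‖a − b‖. -/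
open scoped RealInnerProductSpace

lemma key_ineq {s x y : ℝ} (hs : 0 ≤ s) (hy : 0 ≤ y) (hyx : y ≤ x) :
    (x ^ s - y ^ s) * y ≤ s * x ^ s * (x - y) := by
  rcases hy.eq_or_lt with rfl | hy0
  · simp
    positivity
  rcases hyx.eq_or_lt with rfl | hlt
  · simp
  have hx0 : 0 < x := lt_trans hy0 hlt
  -- MVT
  obtain ⟨c, hc, hcd⟩ := exists_hasDerivAt_eq_slope (fun t => t ^ s)
    (fun t => s * t ^ (s - 1)) hlt
    (by
      apply ContinuousOn.rpow_const continuousOn_id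
      intro t ht
      exact Or.inl (ne_of_gt (lt_of_lt_of_le hy0 ht.1)))
    (fun t ht => by
      have := Real.hasDerivAt_rpow_const (x := t) (p := s) (Or.inl (ne_of_gt (lt_trans hy0 ht.1)))
      simpa [mul_comm] using this)
  have hc0 : 0 < c := lt_trans hy0 hc.1
  have hsub : x ^ s - y ^ s = s * c ^ (s - 1) * (x - y) := by
    rw [eq_div_iff (sub_ne_zero.mpr hlt.ne')] at hcd
    linarith
  rw [hsub]
  have hkey : c ^ (s - 1) * y ≤ x ^ s := by
    rcases le_total 1 s with h1 | h1
    · have h2 : c ^ (s - 1) ≤ x ^ (s - 1) :=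
        Real.rpow_le_rpow hc0.le hc.2.le (by linarith)
      calc c ^ (s - 1) * y ≤ x ^ (s - 1) * x := by
            apply mul_le_mul h2 hyx hy0.le (Real.rpow_nonneg hx0.le _)
        _ = x ^ s := by
            rw [← Real.rpow_add_one (ne_of_gt hx0)]; ring_nf
    · have h2 : c ^ (s - 1) ≤ y ^ (s - 1) :=
        Real.rpow_le_rpow_of_nonpos hy0 hc.1.le (by linarith)
      calc c ^ (s - 1) * y ≤ y ^ (s - 1) * y :=
            mul_le_mul_of_nonneg_right h2 hy0.le
        _ = y ^ s := by rw [← Real.rpow_add_one (ne_of_gt hy0)]; ring_nf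
        _ ≤ x ^ s := Real.rpow_le_rpow hy0.le hyx hs
  calc s * c ^ (s - 1) * (x - y) * y = (c ^ (s - 1) * y) * (s * (x - y)) := by ring
    _ ≤ x ^ s * (s * (x - y)) := by
        apply mul_le_mul_of_nonneg_right hkey (by nlinarith)
    _ = s * x ^ s * (x - y) := by ring

lemma forch_aux {E : Type*} [NormedAddCommGroup E] [InnerProductSpace ℝ E]
    {s : ℝ} (hs : 0 ≤ s) {a b : E} (h : ‖b‖ ≤ ‖a‖) :
    ‖‖a‖ ^ s • a - ‖b‖ ^ s • b‖ ≤ (1 + s) * (‖a‖ + ‖b‖) ^ s * ‖a - b‖ := by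
  have hb : (0:ℝ) ≤ ‖b‖ := norm_nonneg b
  have key : (‖a‖ ^ s - ‖b‖ ^ s) * ‖b‖ ≤ s * ‖a‖ ^ s * (‖a‖ - ‖b‖) := key_ineq hs hb h
  have hnn : ‖a‖ - ‖b‖ ≤ ‖a - b‖ := by
    have := abs_norm_sub_norm_le a b
    exact le_trans (le_abs_self _) this
  have hsplit : ‖a‖ ^ s • a - ‖b‖ ^ s • b
      = ‖a‖ ^ s • (a - b) + (‖a‖ ^ s - ‖b‖ ^ s) • b := by
    rw [smul_sub, sub_smul]; abel
  have hspow : (0:ℝ) ≤ ‖a‖ ^ s := Real.rpow_nonneg (norm_nonneg a) _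
  have hdiff : (0:ℝ) ≤ ‖a‖ ^ s - ‖b‖ ^ s := by
    have := Real.rpow_le_rpow hb h hs
    linarith
  calc ‖‖a‖ ^ s • a - ‖b‖ ^ s • b‖
      ≤ ‖‖a‖ ^ s • (a - b)‖ + ‖(‖a‖ ^ s - ‖b‖ ^ s) • b‖ := by
        rw [hsplit]; exact norm_add_le _ _
    _ = ‖a‖ ^ s * ‖a - b‖ + (‖a‖ ^ s - ‖b‖ ^ s) * ‖b‖ := by
        rw [norm_smul, norm_smul, Real.norm_of_nonneg hspow, Real.norm_of_nonneg hdiff]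
    _ ≤ ‖a‖ ^ s * ‖a - b‖ + s * ‖a‖ ^ s * ‖a - b‖ := by
        have h2 : s * ‖a‖ ^ s * (‖a‖ - ‖b‖) ≤ s * ‖a‖ ^ s * ‖a - b‖ :=
          mul_le_mul_of_nonneg_left hnn (by positivity)
        linarith
    _ = (1 + s) * ‖a‖ ^ s * ‖a - b‖ := by ring
    _ ≤ (1 + s) * (‖a‖ + ‖b‖) ^ s * ‖a - b‖ := by
        apply mul_le_mul_of_nonneg_right _ (norm_nonneg _)
        apply mul_le_mul_of_nonneg_left _ (by linarith)
        exact Real.rpow_le_rpow (norm_nonneg a) (by linarith) hs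


/-- Local Lipschitz estimate for the Forchheimer nonlinearity (paper estimate (213)). -/
theorem forchheimer_local_lipschitz
    {E : Type*} [NormedAddCommGroup E] [InnerProductSpace ℝ E]
    (r : ℝ) (hr : 1 ≤ r) (a b : E) :
    ‖‖a‖ ^ (r - 1) • a - ‖b‖ ^ (r - 1) • b‖ ≤
      r * (‖a‖ + ‖b‖) ^ (r - 1) * ‖a - b‖ := by
  have hs : (0:ℝ) ≤ r - 1 := by linarith
  have hr' : (1 + (r - 1)) = r := by ring
  rcases le_total ‖b‖ ‖a‖ with h | h
  · have := forch_aux hs h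
    rwa [hr'] at this
  · have := forch_aux hs h
    rw [hr'] at this
    calc ‖‖a‖ ^ (r-1) • a - ‖b‖ ^ (r-1) • b‖
        = ‖‖b‖ ^ (r-1) • b - ‖a‖ ^ (r-1) • a‖ := (norm_sub_rev _ _)
      _ ≤ r * (‖b‖ + ‖a‖) ^ (r-1) * ‖b - a‖ := this
      _ = r * (‖a‖ + ‖b‖) ^ (r-1) * ‖a - b‖ := by rw [add_comm, norm_sub_rev]
end

section
/- Let (Ω, μ) be a measure space, let r > 3 be a real number, let ε > 0, and let F, G : Ω → [0, ∞] be measurable. Then ∫⁻ F² · G dμ ≤ (the image of ε in [0, ∞]) · ∫⁻ F^(r−1) · G dμ + (the image of ((r−3)/(r−1)) · (2/(ε·(r−1)))^(2/(r−3)) in [0, ∞]) · ∫⁻ G dμ. -/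
/-!
Pointwise, `t ^ 2 ≤ ε t ^ (r - 1) + C` for every `t ≥ 0`: this is the weighted AM–GM inequality
with weights `2 / (r - 1)` and `(r - 3) / (r - 1)`, applied to `(ε (r - 1) / 2) t ^ (r - 1)` and to
the constant `(2 / (ε (r - 1))) ^ (2 / (r - 3))`, chosen so that the geometric mean is exactly
`t ^ 2`. Multiplying by `G` and integrating gives the estimate.
-/

open MeasureTheory
open scoped ENNReal

theorem Real.rpow_le_mul_rpow_add {a b ε t : ℝ} (ha : 0 < a) (hab : a < b) (hε : 0 < ε)
    (ht : 0 ≤ t) :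
    t ^ a ≤ ε * t ^ b + (b - a) / b * (a / (ε * b)) ^ (a / (b - a)) := by
  have hb : 0 < b := ha.trans hab
  have hba : 0 < b - a := sub_pos.2 hab
  set X : ℝ := ε * b / a with hX_def
  have hX : 0 < X := by positivity
  have amgm := Real.geom_mean_le_arith_mean2_weighted (w₁ := a / b) (w₂ := (b - a) / b)
    (p₁ := X * t ^ b) (p₂ := X⁻¹ ^ (a / (b - a))) (by positivity) (by positivity)
    (by positivity) (by positivity) (by field_simp; ring)
  have geom : (X * t ^ b) ^ (a / b) * (X⁻¹ ^ (a / (b - a))) ^ ((b - a) / b) = t ^ a := by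
    rw [Real.mul_rpow hX.le (by positivity), ← Real.rpow_mul ht, ← Real.rpow_mul (by positivity),
      Real.inv_rpow hX.le, mul_div_cancel₀ a hb.ne', div_mul_div_cancel₀ hba.ne']
    field_simp
  have arith : a / b * (X * t ^ b) + (b - a) / b * X⁻¹ ^ (a / (b - a)) =
      ε * t ^ b + (b - a) / b * (a / (ε * b)) ^ (a / (b - a)) := by
    rw [hX_def, inv_div]
    field_simp
  rwa [geom, arith] at amgm

theorem ENNReal.rpow_le_mul_rpow_add {a b ε : ℝ} (ha : 0 < a) (hab : a < b) (hε : 0 < ε)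
    (x : ℝ≥0∞) :
    x ^ a ≤ ENNReal.ofReal ε * x ^ b +
      ENNReal.ofReal ((b - a) / b * (a / (ε * b)) ^ (a / (b - a))) := by
  have hb : 0 < b := ha.trans hab
  rcases eq_or_ne x ⊤ with rfl | hx
  · simp [ENNReal.top_rpow_of_pos hb, hε]
  rw [← ENNReal.ofReal_toReal hx, ENNReal.ofReal_rpow_of_nonneg ENNReal.toReal_nonneg ha.le,
    ENNReal.ofReal_rpow_of_nonneg ENNReal.toReal_nonneg hb.le, ← ENNReal.ofReal_mul hε.le,
    ← ENNReal.ofReal_add (by positivity) (by positivity)]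
  exact ENNReal.ofReal_le_ofReal (Real.rpow_le_mul_rpow_add ha hab hε ENNReal.toReal_nonneg)

theorem MeasureTheory.lintegral_rpow_mul_le {Ω : Type*} [MeasurableSpace Ω] {μ : Measure Ω}
    {a b ε : ℝ} (ha : 0 < a) (hab : a < b) (hε : 0 < ε) (F : Ω → ℝ≥0∞) {G : Ω → ℝ≥0∞}
    (hG : AEMeasurable G μ) :
    ∫⁻ ω, F ω ^ a * G ω ∂μ ≤
      ENNReal.ofReal ε * ∫⁻ ω, F ω ^ b * G ω ∂μ +
        ENNReal.ofReal ((b - a) / b * (a / (ε * b)) ^ (a / (b - a))) * ∫⁻ ω, G ω ∂μ := by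
  set C := ENNReal.ofReal ((b - a) / b * (a / (ε * b)) ^ (a / (b - a)))
  calc ∫⁻ ω, F ω ^ a * G ω ∂μ
      ≤ ∫⁻ ω, ENNReal.ofReal ε * (F ω ^ b * G ω) + C * G ω ∂μ := by
        refine lintegral_mono fun ω => ?_
        calc F ω ^ a * G ω ≤ (ENNReal.ofReal ε * F ω ^ b + C) * G ω := by
              gcongr; exact ENNReal.rpow_le_mul_rpow_add ha hab hε _
          _ = _ := by ring
    _ = ENNReal.ofReal ε * ∫⁻ ω, F ω ^ b * G ω ∂μ + C * ∫⁻ ω, G ω ∂μ := by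
        rw [lintegral_add_right' _ (hG.const_mul C), lintegral_const_mul' _ _ ENNReal.ofReal_ne_top,
          lintegral_const_mul' _ _ ENNReal.ofReal_ne_top]

theorem holder_young_absorption_general
    {Ω : Type*} [MeasurableSpace Ω] (μ : Measure Ω)
    (r ε : ℝ) (hr : 3 < r) (hε : 0 < ε)
    (F G : Ω → ℝ≥0∞) (hG : Measurable G) :
    ∫⁻ ω, F ω ^ (2 : ℝ) * G ω ∂μ ≤
      ENNReal.ofReal ε * ∫⁻ ω, F ω ^ (r - 1) * G ω ∂μ +
        ENNReal.ofReal (((r - 3) / (r - 1)) * (2 / (ε * (r - 1))) ^ (2 / (r - 3))) *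
          ∫⁻ ω, G ω ∂μ := by
  have key := lintegral_rpow_mul_le (μ := μ) two_pos (by linarith : (2 : ℝ) < r - 1) hε F
    hG.aemeasurable
  rwa [show r - 1 - 2 = r - 3 by ring] at key

/-- The Hölder–Young estimate (2a29)/(6.30) used for local monotonicity of `μA + B + βC`. -/
theorem holder_young_absorption
    {Ω : Type*} [MeasurableSpace Ω] (μ : Measure Ω)
    (r ε : ℝ) (hr : 3 < r) (hε : 0 < ε)
    (F G : Ω → ℝ≥0∞) (hF : Measurable F) (hG : Measurable G) :
    ∫⁻ ω, F ω ^ (2 : ℝ) * G ω ∂μ ≤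
      ENNReal.ofReal ε * ∫⁻ ω, F ω ^ (r - 1) * G ω ∂μ +
        ENNReal.ofReal (((r - 3) / (r - 1)) * (2 / (ε * (r - 1))) ^ (2 / (r - 3))) *
          ∫⁻ ω, G ω ∂μ :=
  holder_young_absorption_general μ r ε hr hε F G hG
end
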